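/- (Correctness of synthesis modulo theories, finite-state formulation) Let φᵀ be a property of infinite traces over pairs (X,Y), and let literals l₁,…,lₙ : X → Y → Prop abstract to Boolean variables. Suppose: (i) ρᴮ = ⟨Q, q₀, δ, o⟩ is a winning strategy for the Boolean abstraction φᴮ, meaning every play of φᴮ generated by ρᴮ on legal environment inputs satisfies φᴮ; (ii) α : X → E is a partitioner mapping each concrete input to its (unique) valid-reaction label; (iii) β : X → Choice → Y is a provider such that for every input vₓ and choice c, the characteristic formula f_c(vₓ, β(vₓ, c)) holds, i.e., each literal lᵢ evaluates at (vₓ, β(vₓ,c)) exactly according to c. Then for every infinite input sequence (xₙ), the trace ((xₙ, yₙ)) produced by the combined strategy ρᵀ = C(α, ρᴮ, β) — with qₙ₊₁ = δ(qₙ, α(xₙ)), cₙ = o(qₙ, α(xₙ)), yₙ = β(xₙ, cₙ) — makes each literal lᵢ at each position n evaluate to cₙ(sᵢ), and hence, since φᴮ holds of the Boolean trace (α(xₙ), cₙ) and φᵀ is obtained from φᴮ by substituting literals for the Boolean variables, the trace ((xₙ, yₙ)) satisfies φᵀ. -/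
import Mathlib


inductive LTL (α : Type*) : Type _ where
  | tt : LTL α
  | atom (a : α) : LTL α
  | or (φ ψ : LTL α) : LTL α
  | not (φ : LTL α) : LTL α
  | next (φ : LTL α) : LTL α
  | until_ (φ ψ : LTL α) : LTL α

/-- Satisfaction of an LTL formula over an infinite trace of letter-predicates. -/
def LTL.Sat {α : Type*} (σ : ℕ → α → Prop) : LTL α → Prop
  | .tt => True
  | .atom a => σ 0 a
  | .or φ ψ => LTL.Sat σ φ ∨ LTL.Sat σ ψ
  | .not φ => ¬ LTL.Sat σ φ
  | .next φ => LTL.Sat (fun n => σ (n + 1)) φ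
  | .until_ φ ψ => ∃ i, LTL.Sat (fun n => σ (n + i)) ψ ∧
      ∀ j < i, LTL.Sat (fun n => σ (n + j)) φ

theorem LTL.sat_congr {α : Type*} {σ τ : ℕ → α → Prop}
    (h : ∀ n a, σ n a ↔ τ n a) (φ : LTL α) : LTL.Sat σ φ ↔ LTL.Sat τ φ := by
  induction φ generalizing σ τ with
  | tt => simp [LTL.Sat]
  | atom a => exact h 0 a
  | or φ ψ ihφ ihψ => exact or_congr (ihφ h) (ihψ h)
  | not φ ih => exact not_congr (ih h)
  | next φ ih => exact ih (fun n a => h (n+1) a)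
  | until_ φ ψ ihφ ihψ =>
      exact exists_congr fun i => and_congr (ihψ fun n a => h (n+i) a)
        (forall_congr' fun j => forall_congr' fun _ => ihφ fun n a => h (n+j) a)

/-- Correctness of synthesis modulo theories.  `X`,`Y` are the concrete input/output
domains, `E` the valid-reaction labels, `ι` indexes the literals/Boolean system
variables, `Q` the controller states.  Atoms of `φᴮ` are either environment
variables `e : E` or system variables `sᵢ : ι`. -/
theorem stmt_13
    {X Y E ι Q : Type*}
    (l : ι → X → Y → Prop)                 -- the literals l₁,…,lₙ
    (φB : LTL (E ⊕ ι))                     -- the Boolean abstraction φᴮ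
    (q₀ : Q) (δ : Q → E → Q) (o : Q → E → (ι → Bool))  -- the Boolean strategy ρᴮ
    -- (i) ρᴮ is winning for φᴮ: every play generated on any environment input
    -- sequence satisfies φᴮ
    (hwin : ∀ (e : ℕ → E) (q : ℕ → Q) (c : ℕ → ι → Bool),
      q 0 = q₀ → (∀ n, q (n + 1) = δ (q n) (e n)) → (∀ n, c n = o (q n) (e n)) →
      LTL.Sat (fun n a => Sum.elim (fun e' => e n = e') (fun i => c n i = true) a) φB)
    -- (ii) the partitioner
    (α : X → E)
    -- (iii) the provider: the characteristic formula f_c(vₓ, β(vₓ,c)) holds, i.e.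
    -- every literal evaluates exactly according to the choice c
    (β : X → (ι → Bool) → Y)
    (hβ : ∀ (vx : X) (c : ι → Bool) (i : ι), l i vx (β vx c) ↔ c i = true)
    -- the run of the combined strategy ρᵀ = C(α, ρᴮ, β)
    (x : ℕ → X) (q : ℕ → Q) (c : ℕ → ι → Bool) (y : ℕ → Y)
    (hq0 : q 0 = q₀) (hq : ∀ n, q (n + 1) = δ (q n) (α (x n)))
    (hc : ∀ n, c n = o (q n) (α (x n)))
    (hy : ∀ n, y n = β (x n) (c n)) :
    -- each literal evaluates at each position according to cₙ, and the concrete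
    -- trace (xₙ,yₙ) satisfies φᵀ = φᴮ[e ← (α(x)=e), sᵢ ← lᵢ(x,y)]
    (∀ n i, l i (x n) (y n) ↔ c n i = true) ∧
    LTL.Sat
      (fun n a => Sum.elim (fun e' => α (x n) = e') (fun i => l i (x n) (y n)) a) φB := by
  have hl : ∀ n i, l i (x n) (y n) ↔ c n i = true := by
    intro n i; rw [hy]; exact hβ _ _ i
  refine ⟨hl, ?_⟩
  have := hwin (fun n => α (x n)) q c hq0 hq hc
  refine (LTL.sat_congr ?_ φB).mp this
  intro n a
  cases a with
  | inl e' => rfl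
  | inr i => exact (hl n i).symm
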